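/- arXiv:1907.03995 — 2 statements merged into one kernel-verified Lean document; each statement's English description precedes it below -/
import Mathlib

section
/- Let a and b be bounded operators on a Hilbert space H. Then a and b are disjoint (a*b = 0 and a b* = 0) if and only if |a| and |b| are disjoint and |a*| and |b*| are disjoint, where |x| denotes the absolute value (positive square root of x*x). -/
/-!
Since `|a|² = a* a`, we have `(|a| c)* (|a| c) = (a c)* (a c)`, so by the C*-identity
`|a| c = 0 ↔ a c = 0`. Applying this on both sides of `|a| |b|` and taking adjoints in between
turns `|a| |b| = 0` into `a b* = 0`; the same with `a*, b*` gives the other half.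
-/

open ContinuousLinearMap in
/-- The absolute value `|x| = (x* x)^{1/2}` of a bounded operator. -/
noncomputable def opAbs {H : Type*} [NormedAddCommGroup H] [InnerProductSpace ℂ H]
    [CompleteSpace H] (x : H →L[ℂ] H) : H →L[ℂ] H :=
  CFC.sqrt (adjoint x * x)

namespace CFC

variable {A : Type*} [NonUnitalCStarAlgebra A] [PartialOrder A] [StarOrderedRing A]

lemma abs_mul_eq_zero_iff (a c : A) : abs a * c = 0 ↔ a * c = 0 := by
  have h : star (abs a * c) * (abs a * c) = star (a * c) * (a * c) := by
    simp only [star_mul, (abs_nonneg a).isSelfAdjoint.star_eq, mul_assoc, ← mul_assoc (abs a),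
      abs_mul_abs]
  rw [← CStarRing.star_mul_self_eq_zero_iff, h, CStarRing.star_mul_self_eq_zero_iff]

lemma abs_mul_abs_eq_zero_iff (a b : A) : abs a * abs b = 0 ↔ a * star b = 0 := by
  have star_swap {x y : A} : x * y = 0 ↔ star y * star x = 0 := by
    rw [← star_mul, star_eq_zero]
  calc abs a * abs b = 0 ↔ a * abs b = 0 := abs_mul_eq_zero_iff a _
    _ ↔ abs b * star a = 0 := by rw [star_swap, (abs_nonneg b).isSelfAdjoint.star_eq]
    _ ↔ b * star a = 0 := abs_mul_eq_zero_iff b _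
    _ ↔ a * star b = 0 := by rw [star_swap, star_star]

end CFC

lemma opAbs_eq_abs {H : Type*} [NormedAddCommGroup H] [InnerProductSpace ℂ H]
    [CompleteSpace H] (x : H →L[ℂ] H) : opAbs x = CFC.abs x := rfl

theorem disjoint_iff_abs_disjoint {H : Type*} [NormedAddCommGroup H] [InnerProductSpace ℂ H]
    [CompleteSpace H] (a b : H →L[ℂ] H) :
    (ContinuousLinearMap.adjoint a * b = 0 ∧ a * ContinuousLinearMap.adjoint b = 0) ↔
      (opAbs a * opAbs b = 0 ∧
        opAbs (ContinuousLinearMap.adjoint a) * opAbs (ContinuousLinearMap.adjoint b) = 0) := by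
  simp only [opAbs_eq_abs, CFC.abs_mul_abs_eq_zero_iff, ← ContinuousLinearMap.star_eq_adjoint,
    star_star]
  exact and_comm
end

section
/- Let a, b be n×n complex matrices with a*b = 0 and a b* = 0, with polar decompositions a = u|a|, b = v|b|. Setting a₁ = u|a|^{1/2}, a₂ = |a|^{1/2}, b₁ = v|b|^{1/2}, b₂ = |b|^{1/2}, one has a = a₁a₂, b = b₁b₂, and the estimate ‖a₁a₁* + b₁b₁*‖₂ · ‖a₂*a₂ + b₂*b₂‖₂ ≤ ‖a‖₂² + ‖b‖₂², where ‖·‖₂ is the Frobenius norm. -/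
open Matrix ComplexOrder

/-- The Frobenius (Hilbert–Schmidt) norm `‖x‖₂ = sqrt(trace(x* x))` of a complex matrix. -/
noncomputable def frob {n : ℕ} (x : Matrix (Fin n) (Fin n) ℂ) : ℝ :=
  Real.sqrt ((xᴴ * x).trace.re)

/-- The square root of a Hermitian (positive semidefinite) matrix, spelled out as the
removed `Matrix.PosSemidef.sqrt` was defined in the older Mathlib. -/
noncomputable def oldPsdSqrt {n : ℕ} {A : Matrix (Fin n) (Fin n) ℂ} (hA : A.IsHermitian) :
    Matrix (Fin n) (Fin n) ℂ :=
  hA.eigenvectorUnitary.1 * diagonal ((↑) ∘ (√·) ∘ hA.eigenvalues) *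
  (star hA.eigenvectorUnitary : Matrix (Fin n) (Fin n) ℂ)

theorem oldPsdSqrt_isHermitian {n : ℕ} {A : Matrix (Fin n) (Fin n) ℂ} (hA : A.IsHermitian) :
    (oldPsdSqrt hA).IsHermitian := by
  unfold oldPsdSqrt
  rw [star_eq_conjTranspose]
  exact isHermitian_mul_mul_conjTranspose _
    (isHermitian_diagonal_of_self_adjoint _ (by ext i; simp [Function.comp]))

/-- The absolute value `|x| = (x* x)^{1/2}` of a complex matrix. -/
noncomputable def matAbs {n : ℕ} (x : Matrix (Fin n) (Fin n) ℂ) : Matrix (Fin n) (Fin n) ℂ :=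
  oldPsdSqrt (Matrix.posSemidef_conjTranspose_mul_self x).1

/-- The square root `|x|^{1/2}` of the absolute value of a complex matrix. -/
noncomputable def matAbsSqrt {n : ℕ} (x : Matrix (Fin n) (Fin n) ℂ) :
    Matrix (Fin n) (Fin n) ℂ :=
  oldPsdSqrt (oldPsdSqrt_isHermitian (Matrix.posSemidef_conjTranspose_mul_self x).1)

/-! With `P = |a|` and `Q = |b|`, the two factors are `P + Q` and `uPu* + vQv*`. Each is a sum of
two Hermitian matrices with vanishing product: `P²Q² = a*(ab*)b = 0` forces `PQ = 0`, and
`uPu*·vQv* = u(a*b)v* = 0`. So their squared Frobenius norms add, and since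
`(uPu*)² = u(a*a)u* = uP²u* = aa*`, both factors have Frobenius norm `(‖a‖₂² + ‖b‖₂²)^{1/2}`:
the estimate holds with equality. -/

namespace Matrix

variable {m 𝕜 : Type*} [Fintype m] [RCLike 𝕜] {P Q X Y a b u v : Matrix m m 𝕜}

theorem IsHermitian.mul_eq_zero_of_mul_self_mul_mul_self_eq_zero (hP : P.IsHermitian)
    (hQ : Q.IsHermitian) (h : P * P * (Q * Q) = 0) : P * Q = 0 := by
  have hPQQ : P * (Q * Q) = 0 := by
    rwa [← conjTranspose_mul_self_mul_eq_zero, hP.eq]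
  rwa [← hQ.eq, ← mul_conjTranspose_mul_self_eq_zero, hQ.eq]

theorem IsHermitian.conjTranspose_mul_self_add (hX : X.IsHermitian) (hY : Y.IsHermitian)
    (h : X * Y = 0) : (X + Y)ᴴ * (X + Y) = X * X + Y * Y := by
  have h' : Y * X = 0 := by
    rw [← hX.eq, ← hY.eq, ← conjTranspose_mul, h, conjTranspose_zero]
  rw [(hX.add hY).eq, add_mul, mul_add, mul_add, h, h', add_zero, zero_add]

theorem mul_mul_conjTranspose_mul_self_of_eq_mul (hP : P.IsHermitian) (ha : a = u * P)
    (hPP : P * P = aᴴ * a) : u * P * uᴴ * (u * P * uᴴ) = a * aᴴ :=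
  calc u * P * uᴴ * (u * P * uᴴ) = u * (aᴴ * a) * uᴴ := by
        rw [ha, conjTranspose_mul, hP.eq]; simp only [mul_assoc]
    _ = a * aᴴ := by rw [← hPP, ha, conjTranspose_mul, hP.eq]; simp only [mul_assoc]

theorem mul_mul_conjTranspose_mul_eq_zero_of_eq_mul (hP : P.IsHermitian) (ha : a = u * P)
    (hb : b = v * Q) (h : aᴴ * b = 0) : u * P * uᴴ * (v * Q * vᴴ) = 0 :=
  calc u * P * uᴴ * (v * Q * vᴴ) = u * ((u * P)ᴴ * (v * Q)) * vᴴ := by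
        rw [conjTranspose_mul, hP.eq]; simp only [mul_assoc]
    _ = 0 := by rw [← ha, ← hb, h, mul_zero, zero_mul]

end Matrix

section

variable {n : ℕ}

theorem sq_frob (x : Matrix (Fin n) (Fin n) ℂ) : frob x ^ 2 = (xᴴ * x).trace.re :=
  Real.sq_sqrt (Complex.nonneg_iff.mp (posSemidef_conjTranspose_mul_self x).trace_nonneg).1

theorem frob_add_of_mul_eq_zero {X Y : Matrix (Fin n) (Fin n) ℂ} (hX : X.IsHermitian)
    (hY : Y.IsHermitian) (h : X * Y = 0) :
    frob (X + Y) = √((X * X).trace.re + (Y * Y).trace.re) := by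
  rw [frob, hX.conjTranspose_mul_self_add hY h, trace_add, Complex.add_re]

theorem oldPsdSqrt_eq_cfc {A : Matrix (Fin n) (Fin n) ℂ} (hA : A.IsHermitian) :
    oldPsdSqrt hA = cfc Real.sqrt A := by
  rw [hA.cfc_eq, IsHermitian.cfc, Unitary.conjStarAlgAut_apply]
  rfl

theorem spectrum_oldPsdSqrt_nonneg {A : Matrix (Fin n) (Fin n) ℂ} (hA : A.IsHermitian) :
    ∀ x ∈ spectrum ℝ (oldPsdSqrt hA), 0 ≤ x := by
  rw [oldPsdSqrt_eq_cfc, cfc_map_spectrum Real.sqrt A]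
  rintro _ ⟨y, -, rfl⟩
  exact Real.sqrt_nonneg y

theorem oldPsdSqrt_mul_self {A : Matrix (Fin n) (Fin n) ℂ} (hA : A.IsHermitian)
    (h : ∀ x ∈ spectrum ℝ A, 0 ≤ x) : oldPsdSqrt hA * oldPsdSqrt hA = A := by
  rw [oldPsdSqrt_eq_cfc, ← cfc_mul Real.sqrt Real.sqrt A]
  conv_rhs => rw [← cfc_id' ℝ A]
  exact cfc_congr fun x hx => Real.mul_self_sqrt (h x hx)

variable (x : Matrix (Fin n) (Fin n) ℂ)

theorem matAbs_isHermitian : (matAbs x).IsHermitian :=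
  oldPsdSqrt_isHermitian _

theorem matAbsSqrt_isHermitian : (matAbsSqrt x).IsHermitian :=
  oldPsdSqrt_isHermitian _

theorem matAbs_mul_self : matAbs x * matAbs x = xᴴ * x := by
  refine oldPsdSqrt_mul_self _ ?_
  have hx := posSemidef_conjTranspose_mul_self x
  rw [hx.1.spectrum_real_eq_range_eigenvalues]
  rintro _ ⟨i, rfl⟩
  exact hx.eigenvalues_nonneg i

theorem matAbsSqrt_mul_self : matAbsSqrt x * matAbsSqrt x = matAbs x :=
  oldPsdSqrt_mul_self _ (spectrum_oldPsdSqrt_nonneg _)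

theorem conjTranspose_matAbsSqrt_mul_self : (matAbsSqrt x)ᴴ * matAbsSqrt x = matAbs x := by
  rw [(matAbsSqrt_isHermitian x).eq, matAbsSqrt_mul_self]

theorem mul_matAbsSqrt_mul_conjTranspose (u : Matrix (Fin n) (Fin n) ℂ) :
    u * matAbsSqrt x * (u * matAbsSqrt x)ᴴ = u * matAbs x * uᴴ := by
  rw [conjTranspose_mul, (matAbsSqrt_isHermitian x).eq, ← matAbsSqrt_mul_self]
  simp only [mul_assoc]

end

theorem matAbs_mul_matAbs_eq_zero {n : ℕ} {a b : Matrix (Fin n) (Fin n) ℂ} (h : a * bᴴ = 0) :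
    matAbs a * matAbs b = 0 := by
  refine (matAbs_isHermitian a).mul_eq_zero_of_mul_self_mul_mul_self_eq_zero
    (matAbs_isHermitian b) ?_
  rw [matAbs_mul_self, matAbs_mul_self, mul_assoc, ← mul_assoc a, h, zero_mul, mul_zero]

theorem disjoint_factorization_estimate_general {n : ℕ} (a b u v : Matrix (Fin n) (Fin n) ℂ)
    (ha : a = u * matAbs a) (hb : b = v * matAbs b)
    (h₁ : aᴴ * b = 0) (h₂ : a * bᴴ = 0) :
    a = (u * matAbsSqrt a) * matAbsSqrt a ∧
      b = (v * matAbsSqrt b) * matAbsSqrt b ∧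
      frob ((u * matAbsSqrt a) * (u * matAbsSqrt a)ᴴ + (v * matAbsSqrt b) * (v * matAbsSqrt b)ᴴ) *
          frob ((matAbsSqrt a)ᴴ * matAbsSqrt a + (matAbsSqrt b)ᴴ * matAbsSqrt b) ≤
        frob a ^ 2 + frob b ^ 2 := by
  refine ⟨by rwa [mul_assoc, matAbsSqrt_mul_self], by rwa [mul_assoc, matAbsSqrt_mul_self], ?_⟩
  have hP := matAbs_isHermitian a
  have hQ := matAbs_isHermitian b
  have hleft : frob ((u * matAbsSqrt a) * (u * matAbsSqrt a)ᴴ +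
      (v * matAbsSqrt b) * (v * matAbsSqrt b)ᴴ) = √(frob a ^ 2 + frob b ^ 2) := by
    rw [mul_matAbsSqrt_mul_conjTranspose, mul_matAbsSqrt_mul_conjTranspose,
      frob_add_of_mul_eq_zero (isHermitian_mul_mul_conjTranspose u hP)
        (isHermitian_mul_mul_conjTranspose v hQ)
        (mul_mul_conjTranspose_mul_eq_zero_of_eq_mul hP ha hb h₁),
      mul_mul_conjTranspose_mul_self_of_eq_mul hP ha (matAbs_mul_self a),
      mul_mul_conjTranspose_mul_self_of_eq_mul hQ hb (matAbs_mul_self b),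
      trace_mul_comm a, trace_mul_comm b, sq_frob, sq_frob]
  have hright : frob ((matAbsSqrt a)ᴴ * matAbsSqrt a + (matAbsSqrt b)ᴴ * matAbsSqrt b) =
      √(frob a ^ 2 + frob b ^ 2) := by
    rw [conjTranspose_matAbsSqrt_mul_self, conjTranspose_matAbsSqrt_mul_self,
      frob_add_of_mul_eq_zero hP hQ (matAbs_mul_matAbs_eq_zero h₂), matAbs_mul_self,
      matAbs_mul_self, sq_frob, sq_frob]
  rw [hleft, hright, Real.mul_self_sqrt (by positivity)]

theorem disjoint_factorization_estimate {n : ℕ} (a b u v : Matrix (Fin n) (Fin n) ℂ)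
    (hu : u * uᴴ * u = u) (hv : v * vᴴ * v = v)
    (ha : a = u * matAbs a) (hb : b = v * matAbs b)
    (h₁ : aᴴ * b = 0) (h₂ : a * bᴴ = 0) :
    a = (u * matAbsSqrt a) * matAbsSqrt a ∧
      b = (v * matAbsSqrt b) * matAbsSqrt b ∧
      frob ((u * matAbsSqrt a) * (u * matAbsSqrt a)ᴴ + (v * matAbsSqrt b) * (v * matAbsSqrt b)ᴴ) *
          frob ((matAbsSqrt a)ᴴ * matAbsSqrt a + (matAbsSqrt b)ᴴ * matAbsSqrt b) ≤
        frob a ^ 2 + frob b ^ 2 :=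
  disjoint_factorization_estimate_general a b u v ha hb h₁ h₂
end
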